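/- Let E be a complex Banach space and F : E → E a map with a fixed point P (F(P) = P) that is Fréchet differentiable at every point of an open neighborhood of P, with derivative DF continuous at P, and such that the spectral radius of the continuous linear operator DF(P) is strictly less than 1. Then P is a locally attracting fixed point: there exists ε > 0 such that for every x₀ with ‖x₀ − P‖ < ε the iterates F^[n](x₀) converge to P. -/

import Mathlib

open Filter Topology

/-! Gelfand's formula turns `ρ(DF(P)) < 1` into `‖DF(P)ᵐ‖ < 1` for some `m > 0`. By the chain rule
`DF(P)ᵐ` is the derivative of `F^[m]` at `P`, so `F^[m]` contracts a small ball around `P` towards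
`P`, and its iterates converge to `P` geometrically. The remaining iterates `F^[mq + r]`, `r < m`,
are controlled by the continuity of the finitely many maps `F^[r]` at `P`. -/

def IsAttractingFixedPt {X : Type*} [TopologicalSpace X] (f : X → X) (p : X) : Prop :=
  ∀ᶠ x in 𝓝 p, Tendsto (fun n => f^[n] x) atTop (𝓝 p)

theorem exists_pow_norm_lt_one_of_spectralRadius_lt_one {A : Type*} [NormedRing A]
    [NormedAlgebra ℂ A] [CompleteSpace A] {a : A} (ha : spectralRadius ℂ a < 1) :
    ∃ m, 0 < m ∧ ‖a ^ m‖ < 1 := by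
  obtain ⟨m, hm_lt, hm_pos⟩ :=
    (((spectrum.pow_norm_pow_one_div_tendsto_nhds_spectralRadius a).eventually_lt_const ha).and
      (eventually_gt_atTop 0)).exists
  rw [ENNReal.ofReal_lt_one, Real.rpow_lt_one_iff' (norm_nonneg _) (by positivity)] at hm_lt
  exact ⟨m, hm_pos, hm_lt⟩

theorem HasFDerivAt.eventually_dist_le_mul_of_opNorm_lt {𝕜 E : Type*} [NontriviallyNormedField 𝕜]
    [NormedAddCommGroup E] [NormedSpace 𝕜 E] {G : E → E} {L : E →L[𝕜] E} {p : E}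
    (hG : HasFDerivAt G L p) {c : ℝ} (hc : ‖L‖ < c) :
    ∀ᶠ x in 𝓝 p, dist (G x) (G p) ≤ c * dist x p := by
  filter_upwards [hG.isLittleO.def (sub_pos.2 hc)] with x hx
  rw [dist_eq_norm, dist_eq_norm]
  calc ‖G x - G p‖ ≤ ‖G x - G p - L (x - p)‖ + ‖L (x - p)‖ := norm_le_norm_sub_add _ _
    _ ≤ (c - ‖L‖) * ‖x - p‖ + ‖L‖ * ‖x - p‖ := add_le_add hx (L.le_opNorm _)
    _ = c * ‖x - p‖ := by ring

theorem tendsto_iterate_of_dist_le_mul {X : Type*} [PseudoMetricSpace X] {G : X → X} {p : X}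
    {c ε : ℝ} (hc₀ : 0 ≤ c) (hc₁ : c < 1) (hG : ∀ x, dist x p < ε → dist (G x) p ≤ c * dist x p)
    {x : X} (hx : dist x p < ε) : Tendsto (fun n => G^[n] x) atTop (𝓝 p) := by
  have h_geom : ∀ n, dist (G^[n] x) p ≤ c ^ n * dist x p := by
    intro n
    induction n with
    | zero => simp
    | succ n ih =>
      have h_in : dist (G^[n] x) p < ε :=
        ih.trans_lt ((mul_le_of_le_one_left dist_nonneg (pow_le_one₀ hc₀ hc₁.le)).trans_lt hx)
      rw [Function.iterate_succ_apply', pow_succ', mul_assoc]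
      exact (hG _ h_in).trans (mul_le_mul_of_nonneg_left ih hc₀)
  refine tendsto_iff_dist_tendsto_zero.2 (squeeze_zero (fun _ => dist_nonneg) h_geom ?_)
  simpa using (tendsto_pow_atTop_nhds_zero_of_lt_one hc₀ hc₁).mul_const (dist x p)

theorem isAttractingFixedPt_of_hasFDerivAt_of_opNorm_lt_one {𝕜 E : Type*}
    [NontriviallyNormedField 𝕜] [NormedAddCommGroup E] [NormedSpace 𝕜 E] {G : E → E}
    {L : E →L[𝕜] E} {p : E} (hGp : G p = p) (hG : HasFDerivAt G L p) (hL : ‖L‖ < 1) :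
    IsAttractingFixedPt G p := by
  obtain ⟨ε, hε, h_contr⟩ := Metric.eventually_nhds_iff.1
    (hG.eventually_dist_le_mul_of_opNorm_lt (c := (‖L‖ + 1) / 2) (by linarith))
  rw [hGp] at h_contr
  filter_upwards [Metric.ball_mem_nhds p hε] with x hx
  exact tendsto_iterate_of_dist_le_mul (by positivity) (by linarith) (fun y hy => h_contr hy) hx

theorem IsAttractingFixedPt.of_iterate {X : Type*} [TopologicalSpace X] {f : X → X} {p : X}
    {m : ℕ} (hm : 0 < m) (hfp : f p = p) (hf : ContinuousAt f p)
    (h : IsAttractingFixedPt f^[m] p) : IsAttractingFixedPt f p := by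
  filter_upwards [h] with x hx
  refine fun V hV => mem_map.2 ?_
  have h_near : ∀ᶠ y in 𝓝 p, ∀ r ∈ Set.Iio m, f^[r] y ∈ V :=
    (eventually_all_finite (Set.finite_Iio m)).2 fun r _ =>
      hf.iterate hfp r (by rwa [Function.iterate_fixed hfp])
  obtain ⟨Q, hQ⟩ := eventually_atTop.1 (hx h_near)
  filter_upwards [eventually_ge_atTop (m * Q)] with n hn
  change f^[n] x ∈ V
  rw [← Nat.mod_add_div n m, Function.iterate_add_apply, Function.iterate_mul]
  exact hQ (n / m) ((Nat.le_div_iff_mul_le hm).2 (by linarith [mul_comm m Q]))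
    (n % m) (Nat.mod_lt n hm)

theorem stmt_5_general {E : Type*} [NormedAddCommGroup E] [NormedSpace ℂ E] [CompleteSpace E]
    (F : E → E) (P : E) (hFP : F P = P)
    (U : Set E) (hP : P ∈ U)
    (hFd : ∀ x ∈ U, DifferentiableAt ℂ F x)
    (hspec : spectralRadius ℂ (fderiv ℂ F P) < 1) :
    ∃ ε > 0, ∀ x₀ : E, ‖x₀ - P‖ < ε →
      Tendsto (fun n => F^[n] x₀) atTop (𝓝 P) := by
  have hF : HasFDerivAt F (fderiv ℂ F P) P := (hFd P hP).hasFDerivAt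
  obtain ⟨m, hm, h_norm⟩ := exists_pow_norm_lt_one_of_spectralRadius_lt_one hspec
  have h_attr : IsAttractingFixedPt F P :=
    (isAttractingFixedPt_of_hasFDerivAt_of_opNorm_lt_one (Function.iterate_fixed hFP m)
      (hF.iterate hFP m) h_norm).of_iterate hm hFP hF.continuousAt
  obtain ⟨ε, hε, h_ball⟩ := Metric.eventually_nhds_iff.1 h_attr
  exact ⟨ε, hε, fun x₀ hx₀ => h_ball (by rwa [dist_eq_norm])⟩

/-- If `F` fixes `P`, is differentiable on an open neighborhood of `P` with `DF`
continuous at `P`, and the spectral radius of `DF(P)` is strictly less than `1`,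
then `P` is a locally attracting fixed point of `F`. -/
theorem stmt_5 {E : Type*} [NormedAddCommGroup E] [NormedSpace ℂ E] [CompleteSpace E]
    (F : E → E) (P : E) (hFP : F P = P)
    (U : Set E) (hU : IsOpen U) (hP : P ∈ U)
    (hFd : ∀ x ∈ U, DifferentiableAt ℂ F x)
    (hDFc : ContinuousAt (fun x => fderiv ℂ F x) P)
    (hspec : spectralRadius ℂ (fderiv ℂ F P) < 1) :
    ∃ ε > 0, ∀ x₀ : E, ‖x₀ - P‖ < ε →
      Tendsto (fun n => F^[n] x₀) atTop (𝓝 P) :=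
  stmt_5_general F P hFP U hP hFd hspec
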